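/- Let ρ_a = (1/6)·[[2,a,0,0],[a,1,0,0],[0,0,1,a],[0,0,a,2]] with a ∈ [0,√2]. Then ρ_a is a density matrix with eigenvalues 1/4 ± (1/12)√(4a²+1), each with multiplicity 2; its reduced state ρ_a^A = I/2 (capacity 0) and ρ_a^B = (1/2)[[1, 2a/3],[2a/3, 1]] has largest eigenvalue 1/2 + a/3. -/

import Mathlib

/-!
`ρ_a` is block diagonal with blocks `(1/6)[[2,a],[a,1]]` and `(1/6)[[1,a],[a,2]]`, which share
the characteristic polynomial `x² - x/2 + (2 - a²)/36`; so `det (x - ρ_a)` is its square, and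
since the eigenvalue multiset of a Hermitian matrix is the root multiset of its characteristic
polynomial, the eigenvalues are its two roots `1/4 ± √(4a² + 1)/12`, each twice. They are
nonnegative because `√(4a² + 1) ≤ 3` exactly when `a² ≤ 2`. The same argument applied to the
`2 × 2` reduced state gives its eigenvalues `1/2 ± a/3`.
-/

open Matrix
open scoped ComplexOrder

/-- Partial trace over the second qubit. -/
def trB (ρ : Matrix (Fin 4) (Fin 4) ℂ) : Matrix (Fin 2) (Fin 2) ℂ :=
  !![ρ 0 0 + ρ 1 1, ρ 0 2 + ρ 1 3;
     ρ 2 0 + ρ 3 1, ρ 2 2 + ρ 3 3]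

/-- Partial trace over the first qubit. -/
def trA (ρ : Matrix (Fin 4) (Fin 4) ℂ) : Matrix (Fin 2) (Fin 2) ℂ :=
  !![ρ 0 0 + ρ 2 2, ρ 0 1 + ρ 2 3;
     ρ 1 0 + ρ 3 2, ρ 1 1 + ρ 3 3]

/-- The single-parameter state `ρ_a`. -/
noncomputable def rhoA (a : ℝ) : Matrix (Fin 4) (Fin 4) ℂ :=
  (1 / 6 : ℂ) • !![2, (a : ℂ), 0, 0;
                   (a : ℂ), 1, 0, 0;
                   0, 0, 1, (a : ℂ);
                   0, 0, (a : ℂ), 2]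

/-- The largest eigenvalue of a Hermitian matrix. -/
noncomputable def maxEig {n : ℕ} {M : Matrix (Fin n) (Fin n) ℂ}
    (hM : M.IsHermitian) : ℝ := ⨆ i, hM.eigenvalues i

open Polynomial

namespace Matrix.IsHermitian

variable {𝕜 n : Type*} [RCLike 𝕜] [Fintype n] [DecidableEq n] {A : Matrix n n 𝕜}

lemma eigenvalues_eq_of_det_scalar_sub (hA : A.IsHermitian) {m : Multiset ℝ}
    (h : ∀ x : 𝕜, (scalar n x - A).det = (m.map fun r : ℝ => x - (r : 𝕜)).prod) :
    Finset.univ.val.map hA.eigenvalues = m := by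
  have hchar : A.charpoly = ((m.map (RCLike.ofReal : ℝ → 𝕜)).map fun r => X - C r).prod := by
    refine Polynomial.funext fun x => ?_
    simp only [eval_charpoly, h, eval_multiset_prod, Multiset.map_map, Function.comp_def,
      eval_sub, eval_X, eval_C]
  apply Multiset.map_injective (RCLike.ofReal_injective (K := 𝕜))
  rw [Multiset.map_map, ← hA.roots_charpoly_eq_eigenvalues, hchar, roots_multiset_prod_X_sub_C]

lemma posSemidef_of_eigenvalues_eq (hA : A.IsHermitian) {m : Multiset ℝ}
    (h : Finset.univ.val.map hA.eigenvalues = m) (hm : ∀ r ∈ m, 0 ≤ r) : A.PosSemidef :=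
  hA.posSemidef_iff_eigenvalues_nonneg.mpr fun i =>
    hm _ (h ▸ Multiset.mem_map_of_mem _ (Finset.mem_univ i))

end Matrix.IsHermitian

lemma maxEig_eq_of_eigenvalues_eq {n : ℕ} {M : Matrix (Fin n) (Fin n) ℂ} (hM : M.IsHermitian)
    {m : Multiset ℝ} (h : Finset.univ.val.map hM.eigenvalues = m) {μ : ℝ}
    (hμ : IsGreatest {r | r ∈ m} μ) : maxEig hM = μ := by
  have hrange : Set.range hM.eigenvalues = {r | r ∈ m} := by
    ext r; simp [← h]
  rw [maxEig, iSup, hrange, hμ.csSup_eq]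

lemma scalar_sub_rhoA (a : ℝ) (x : ℂ) :
    scalar (Fin 4) x - rhoA a =
      !![x - 1 / 3, -(a / 6), 0, 0;
         -(a / 6), x - 1 / 6, 0, 0;
         0, 0, x - 1 / 6, -(a / 6);
         0, 0, -(a / 6), x - 1 / 3] := by
  ext i j
  fin_cases i <;> fin_cases j <;> simp [rhoA] <;> ring

lemma det_scalar_sub_rhoA (a : ℝ) (x : ℂ) :
    (scalar (Fin 4) x - rhoA a).det = (x ^ 2 - x / 2 + (2 - (a : ℂ) ^ 2) / 36) ^ 2 := by
  rw [scalar_sub_rhoA, det_succ_row_zero]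
  simp [Fin.sum_univ_succ, Fin.succAbove, det_fin_three]
  ring

lemma eigenvalues_rhoA (a : ℝ) (hρ : (rhoA a).IsHermitian) :
    Finset.univ.val.map hρ.eigenvalues =
      {1 / 4 - √(4 * a ^ 2 + 1) / 12, 1 / 4 - √(4 * a ^ 2 + 1) / 12,
       1 / 4 + √(4 * a ^ 2 + 1) / 12, 1 / 4 + √(4 * a ^ 2 + 1) / 12} := by
  refine hρ.eigenvalues_eq_of_det_scalar_sub fun x => ?_
  have hs : ((√(4 * a ^ 2 + 1) : ℝ) : ℂ) ^ 2 = 4 * (a : ℂ) ^ 2 + 1 := by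
    rw [← Complex.ofReal_pow, Real.sq_sqrt (by positivity)]
    push_cast; ring
  simp only [Complex.coe_algebraMap, Multiset.insert_eq_cons, Multiset.map_cons,
    Multiset.map_singleton, Multiset.prod_cons, Multiset.prod_singleton]
  push_cast
  generalize ((√(4 * a ^ 2 + 1) : ℝ) : ℂ) = s at hs ⊢
  have hfactor : x ^ 2 - x / 2 + (2 - (a : ℂ) ^ 2) / 36 =
      (x - (1 / 4 - s / 12)) * (x - (1 / 4 + s / 12)) := by
    linear_combination (1 / 144 : ℂ) * hs
  rw [det_scalar_sub_rhoA, hfactor]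
  ring

lemma trace_rhoA (a : ℝ) : (rhoA a).trace = 1 := by
  simp [rhoA, trace, Fin.sum_univ_four]
  norm_num

lemma trB_rhoA (a : ℝ) : trB (rhoA a) = (1 / 2 : ℂ) • 1 := by
  ext i j
  fin_cases i <;> fin_cases j <;> simp [trB, rhoA] <;> norm_num

lemma trA_rhoA (a : ℝ) :
    trA (rhoA a) =
      (1 / 2 : ℂ) • !![1, ((2 * a / 3 : ℝ) : ℂ); ((2 * a / 3 : ℝ) : ℂ), 1] := by
  ext i j
  fin_cases i <;> fin_cases j <;> simp [trA, rhoA] <;> ring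

lemma eigenvalues_trA_rhoA (a : ℝ) (hB : (trA (rhoA a)).IsHermitian) :
    Finset.univ.val.map hB.eigenvalues = {1 / 2 - a / 3, 1 / 2 + a / 3} := by
  refine hB.eigenvalues_eq_of_det_scalar_sub fun x => ?_
  rw [trA_rhoA, det_fin_two]
  simp [Multiset.insert_eq_cons]
  ring

/-- `ρ_a` is a density matrix with eigenvalues `1/4 ± (1/12)√(4a²+1)`, each of
multiplicity two; its reduced state on `A` is maximally mixed and its reduced state
on `B` is `(1/2)[[1, 2a/3],[2a/3, 1]]`, with largest eigenvalue `1/2 + a/3`. -/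
theorem stmt_10
    (a : ℝ) (ha0 : 0 ≤ a) (ha2 : a ≤ Real.sqrt 2)
    (hρ : (rhoA a).IsHermitian) (hB : (trA (rhoA a)).IsHermitian) :
    (rhoA a).PosSemidef
    ∧ (rhoA a).trace = 1
    ∧ (Finset.univ.val.map hρ.eigenvalues : Multiset ℝ) =
        {1 / 4 - Real.sqrt (4 * a ^ 2 + 1) / 12, 1 / 4 - Real.sqrt (4 * a ^ 2 + 1) / 12,
         1 / 4 + Real.sqrt (4 * a ^ 2 + 1) / 12, 1 / 4 + Real.sqrt (4 * a ^ 2 + 1) / 12}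
    ∧ trB (rhoA a) = (1 / 2 : ℂ) • 1
    ∧ trA (rhoA a) = (1 / 2 : ℂ) • !![1, ((2 * a / 3 : ℝ) : ℂ); ((2 * a / 3 : ℝ) : ℂ), 1]
    ∧ maxEig hB = 1 / 2 + a / 3 := by
  have hsqrt : √(4 * a ^ 2 + 1) ≤ 3 := by
    have ha_sq : a ^ 2 ≤ 2 := by
      simpa using pow_le_pow_left₀ ha0 ha2 2
    rw [Real.sqrt_le_left (by norm_num)]
    linarith
  refine ⟨hρ.posSemidef_of_eigenvalues_eq (eigenvalues_rhoA a hρ) ?_, trace_rhoA a,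
    eigenvalues_rhoA a hρ, trB_rhoA a, trA_rhoA a,
    maxEig_eq_of_eigenvalues_eq hB (eigenvalues_trA_rhoA a hB) ⟨by simp, ?_⟩⟩
  · intro r hr
    simp only [Multiset.insert_eq_cons, Multiset.mem_cons, Multiset.mem_singleton] at hr
    rcases hr with rfl | rfl | rfl | rfl <;> linarith [Real.sqrt_nonneg (4 * a ^ 2 + 1)]
  · intro r hr
    simp only [Set.mem_ofPred_eq, Multiset.insert_eq_cons, Multiset.mem_cons,
      Multiset.mem_singleton] at hr
    rcases hr with rfl | rfl <;> linarith
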